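/- arXiv:0805.4512 — 7 statements merged into one kernel-verified Lean document; each statement's English description precedes it below -/
import Mathlib

section
/- For every integer k ≥ 1, the identity P_k(T)/Q_k(T) = [v_{1,k}T, v_{2,k}T, …, v_{2k,k}T] holds in the field of rational functions ℚ(T); in particular every v_{i,k} (1 ≤ i ≤ 2k) is a nonzero rational number. -/
open Polynomial

noncomputable section

/-- The rational numbers `v_{i,k}`: `v 1 = 2k-1`,
`v (i+1) * v i = (2k-2i-1)(2k-2i+1)/(i(2k-i))` for `1 ≤ i ≤ 2k-1`. -/
def vRat (k : ℕ) : ℕ → ℚ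
  | 0 => 1
  | 1 => 2 * (k : ℚ) - 1
  | j + 2 =>
      ((2 * (k : ℚ) - 2 * ((j : ℚ) + 1) - 1) * (2 * (k : ℚ) - 2 * ((j : ℚ) + 1) + 1) /
          (((j : ℚ) + 1) * (2 * (k : ℚ) - ((j : ℚ) + 1)))) / vRat k (j + 1)

/-- Finite continued fraction `[a_1, …, a_n] = a_1 + 1/[a_2, …, a_n]`. -/
def cfl {K : Type*} [DivisionRing K] : List K → K
  | [] => 0
  | [a] => a
  | a :: b :: t => a + (cfl (b :: t))⁻¹

/-- `P_k(T) = (T²-1)^k ∈ ℚ[T]`. -/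
def PRat (k : ℕ) : Polynomial ℚ := (X ^ 2 - 1) ^ k

/-- `Q_k(T) = ∫₀^T (x²-1)^(k-1) dx = Σ_{i<k} (-1)^(k-1-i) C(k-1,i) (2i+1)⁻¹ T^(2i+1) ∈ ℚ[T]`. -/
def QRat (k : ℕ) : Polynomial ℚ :=
  ∑ i ∈ Finset.range k,
    Polynomial.C ((-1) ^ (k - 1 - i) * (Nat.choose (k - 1) i : ℚ) * (2 * (i : ℚ) + 1)⁻¹) *
      X ^ (2 * i + 1)

/-! Run the Euclidean algorithm on `P_k / Q_k` "from the top": `s₀ = P_k`, `s₁ = Q_k`,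
`s_{j+2} = s_j - v_{j+1,k} T s_{j+1}`. Up to explicit constants, the remainders are terminating
Gauss hypergeometric polynomials, `s_{2m} ∝ ₂F₁(m-k, 1/2-m; 1/2; T²)` and
`s_{2m+1} ∝ T ₂F₁(m+1-k, 1/2-m; 3/2; T²)`, and the two kinds of steps `s_{2m} ↦ s_{2m+2}` and
`s_{2m+1} ↦ s_{2m+3}` are two of Gauss's contiguous relations; matching constants reproduces the
recursion defining `v_{i,k}`. The constant in front of `s_{2k+1}` contains the factor `k - k`, so
the algorithm stops after `2k` steps and `P_k / Q_k = [v_{1,k} T, …, v_{2k,k} T]`. -/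

open Finset

section Hypergeometric

variable {K : Type*} [Field K]

/-- `(a)ᵢ (b)ᵢ / (i! (c)ᵢ)`, the `i`-th coefficient of Gauss's series `₂F₁(a, b; c; z)`. -/
def hyperTerm (a b c : K) (i : ℕ) : K :=
  ∏ j ∈ range i, (a + j) * (b + j) / ((j + 1) * (c + j))

@[simp]
lemma hyperTerm_zero (a b c : K) : hyperTerm a b c 0 = 1 := prod_range_zero _

lemma hyperTerm_succ (a b c : K) (i : ℕ) :
    hyperTerm a b c (i + 1) = hyperTerm a b c i * ((a + i) * (b + i) / ((i + 1) * (c + i))) :=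
  prod_range_succ _ _

lemma hyperTerm_comm (a b c : K) : hyperTerm a b c = hyperTerm b a c :=
  funext fun _ => prod_congr rfl fun _ _ => by rw [mul_comm (a + _)]

lemma mul_hyperTerm_add_one_right (a b c : K) (i : ℕ) :
    b * hyperTerm a (b + 1) c i = (b + i) * hyperTerm a b c i := by
  induction i with
  | zero => simp
  | succ i ih =>
    rw [hyperTerm_succ, hyperTerm_succ, ← mul_assoc, ih]
    push_cast
    ring

lemma mul_hyperTerm_add_one_left (a b c : K) (i : ℕ) :
    a * hyperTerm (a + 1) b c i = (a + i) * hyperTerm a b c i := by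
  rw [hyperTerm_comm, mul_hyperTerm_add_one_right, hyperTerm_comm]

lemma mul_hyperTerm_lower_add_one {c : K} (hc : ∀ j : ℕ, c + j ≠ 0) (a b : K) (i : ℕ) :
    (c + i) * hyperTerm a b (c + 1) i = c * hyperTerm a b c i := by
  induction i with
  | zero => simp
  | succ i ih =>
    have hci := hc i
    have hci' : c + 1 + i ≠ 0 := by convert hc (i + 1) using 1; push_cast; ring
    rw [hyperTerm_succ, hyperTerm_succ, ← mul_assoc c, ← ih]
    push_cast
    field_simp
    ring

lemma succ_mul_hyperTerm_succ [CharZero K] {c : K} (hc : ∀ j : ℕ, c + j ≠ 0) (a b : K) (i : ℕ) :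
    (i + 1) * c * hyperTerm a b c (i + 1) = a * b * hyperTerm (a + 1) (b + 1) (c + 1) i := by
  induction i with
  | zero =>
    have hc₀ : c ≠ 0 := by simpa using hc 0
    simp [hyperTerm_succ, mul_div_cancel₀ _ hc₀]
  | succ i ih =>
    have hci : c + 1 + i ≠ 0 := by convert hc (i + 1) using 1; push_cast; ring
    have hi : (i : K) + 1 ≠ 0 := Nat.cast_add_one_ne_zero i
    have hi' : (i : K) + 1 + 1 ≠ 0 := by exact_mod_cast Nat.succ_ne_zero (i + 1)
    rw [hyperTerm_succ _ _ _ (i + 1), hyperTerm_succ (a + 1)]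
    push_cast
    rw [show c + (i + 1) = c + 1 + i by ring]
    field_simp
    linear_combination (a + i + 1) * (b + i + 1) * ih

theorem hyperTerm_contiguous_ab [CharZero K] {c : K} (hc : ∀ j : ℕ, c + j ≠ 0) (a b : K) (i : ℕ) :
    c * (hyperTerm a b c (i + 1) - hyperTerm (a + 1) (b - 1) c (i + 1)) =
      (a - b + 1) * hyperTerm (a + 1) b (c + 1) i := by
  have h₁ := succ_mul_hyperTerm_succ hc a b i
  have h₂ := succ_mul_hyperTerm_succ hc (a + 1) (b - 1) i
  rw [sub_add_cancel] at h₂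
  have h₃ := mul_hyperTerm_add_one_right (a + 1) b (c + 1) i
  have h₄ := mul_hyperTerm_add_one_left (a + 1) b (c + 1) i
  apply mul_left_cancel₀ (Nat.cast_add_one_ne_zero i : (i : K) + 1 ≠ 0)
  linear_combination h₁ - h₂ + a * h₃ - (b - 1) * h₄

theorem hyperTerm_contiguous_bc {c : K} (hc : ∀ j : ℕ, c + j ≠ 0) (a b : K) (i : ℕ) :
    b * (a - c) * hyperTerm a (b + 1) (c + 1) i =
      c * (a - b) * hyperTerm a b c i + a * (b - c) * hyperTerm (a + 1) b (c + 1) i := by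
  have h_a := mul_hyperTerm_add_one_left a b (c + 1) i
  have h_b := mul_hyperTerm_add_one_right a b (c + 1) i
  have h_c := mul_hyperTerm_lower_add_one hc a b i
  linear_combination (a - c) * h_b + (a - b) * h_c - (b - c) * h_a

def hyperPoly (a b c : K) (N : ℕ) : K[X] :=
  ∑ i ∈ range N, C (hyperTerm a b c i) * X ^ i

lemma coeff_hyperPoly (a b c : K) (N n : ℕ) :
    (hyperPoly a b c N).coeff n = if n < N then hyperTerm a b c n else 0 := by
  simp [hyperPoly]

lemma hyperPoly_ne_zero (a b c : K) (N : ℕ) : hyperPoly a b c (N + 1) ≠ 0 := fun h => by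
  simpa [h] using coeff_hyperPoly a b c (N + 1) 0

lemma hyperTerm_eq_zero_of_add_eq_zero {a : K} {n i : ℕ} (h : a + n = 0) (hi : n < i) (b c : K) :
    hyperTerm a b c i = 0 :=
  prod_eq_zero (mem_range.2 hi) (by simp [h])

lemma hyperPoly_succ_of_hyperTerm_eq_zero {a b c : K} {N : ℕ} (h : hyperTerm a b c N = 0) :
    hyperPoly a b c (N + 1) = hyperPoly a b c N := by
  rw [hyperPoly, sum_range_succ, h, map_zero, zero_mul, add_zero, hyperPoly]

theorem hyperPoly_contiguous_ab [CharZero K] {c : K} (hc : ∀ j : ℕ, c + j ≠ 0) (a b : K) (N : ℕ) :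
    C c * (hyperPoly a b c (N + 1) - hyperPoly (a + 1) (b - 1) c (N + 1)) =
      C (a - b + 1) * X * hyperPoly (a + 1) b (c + 1) N := by
  ext (_ | n) <;> rw [mul_assoc, coeff_C_mul, coeff_C_mul, coeff_sub]
  · simp [coeff_hyperPoly]
  · rw [coeff_X_mul, coeff_hyperPoly, coeff_hyperPoly, coeff_hyperPoly]
    by_cases h : n < N <;> simp [h, hyperTerm_contiguous_ab hc]

theorem hyperPoly_contiguous_bc {c : K} (hc : ∀ j : ℕ, c + j ≠ 0) (a b : K) (N : ℕ) :
    C (b * (a - c)) * hyperPoly a (b + 1) (c + 1) N =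
      C (c * (a - b)) * hyperPoly a b c N + C (a * (b - c)) * hyperPoly (a + 1) b (c + 1) N := by
  ext n
  simp only [coeff_add, coeff_C_mul, coeff_hyperPoly]
  split_ifs
  · exact hyperTerm_contiguous_bc hc a b n
  · simp

lemma hyperTerm_neg_natCast_self [CharZero K] {c : K} (hc : ∀ j : ℕ, c + j ≠ 0) (n i : ℕ) :
    hyperTerm (-(n : K)) c c i = (-1) ^ i * n.choose i := by
  induction i with
  | zero => simp
  | succ i ih =>
    have hci := hc i
    have hi : (i : K) + 1 ≠ 0 := Nat.cast_add_one_ne_zero i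
    rw [hyperTerm_succ, ih]
    rcases le_or_gt i n with hin | hni
    · have hchoose := congrArg (Nat.cast : ℕ → K) (Nat.choose_succ_right_eq n i)
      push_cast [Nat.cast_sub hin] at hchoose
      field_simp
      linear_combination (-1) ^ i * hchoose
    · simp [Nat.choose_eq_zero_of_lt hni, Nat.choose_eq_zero_of_lt (Nat.lt_succ_of_lt hni)]

end Hypergeometric

section ContinuedFraction

/-- Also for `l = []`, since `cfl [] = 0` and `0⁻¹ = 0`. -/
lemma cfl_cons {K : Type*} [DivisionRing K] (a : K) (l : List K) :
    cfl (a :: l) = a + (cfl l)⁻¹ := by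
  cases l <;> simp [cfl]

theorem cfl_map_range_eq_div {K : Type*} [Field K] (a s : ℕ → K) (n : ℕ)
    (hs : ∀ j, 1 ≤ j → j ≤ n → s j ≠ 0) (hlast : s (n + 1) = 0)
    (hrec : ∀ j < n, s j = a j * s (j + 1) + s (j + 2)) :
    cfl ((List.range n).map a) = s 0 / s 1 := by
  induction n generalizing a s with
  | zero => simp [cfl, hlast]
  | succ n ih =>
    have htail : cfl ((List.range n).map fun j => a (j + 1)) = s 1 / s 2 :=
      ih _ (fun j => s (j + 1)) (fun j h₁ h₂ => hs (j + 1) (by omega) (by omega)) hlast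
        (fun j hj => hrec (j + 1) (by omega))
    have hs₁ := hs 1 le_rfl (by omega)
    rw [List.range_succ_eq_map, List.map_cons, List.map_map, cfl_cons, Function.comp_def, htail,
      inv_div, hrec 0 (by omega)]
    field_simp

end ContinuedFraction

section Coefficients

/-- Up to the sign `(-1)^(k+1)`, the coefficient of `T` in the remainder `s_{2m+1}`. -/
def remainderScale (k m : ℕ) : ℚ :=
  ∏ j ∈ range m,
    4 * ((j : ℚ) + 1) * ((k : ℚ) - j - 1) / ((2 * (j : ℚ) + 1) * (2 * (k : ℚ) - 2 * j - 1))

variable {k m : ℕ}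

@[simp]
lemma remainderScale_zero (k : ℕ) : remainderScale k 0 = 1 := prod_range_zero _

lemma remainderScale_succ (k m : ℕ) :
    remainderScale k (m + 1) = remainderScale k m *
      (4 * ((m : ℚ) + 1) * ((k : ℚ) - m - 1) / ((2 * (m : ℚ) + 1) * (2 * (k : ℚ) - 2 * m - 1))) :=
  prod_range_succ _ _

lemma two_mul_add_one_mul_ne_zero (k m : ℕ) : (2 * m + 1) * (2 * (k : ℚ) - 2 * m - 1) ≠ 0 := by
  have : 2 * (k : ℚ) - 2 * m - 1 ≠ 0 := by
    exact_mod_cast (show 2 * (k : ℤ) - 2 * m - 1 ≠ 0 by omega)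
  positivity

lemma remainderScale_ne_zero (hm : m < k) : remainderScale k m ≠ 0 := by
  refine prod_ne_zero_iff.2 fun j hj => div_ne_zero ?_ (two_mul_add_one_mul_ne_zero k j)
  have : (k : ℚ) - j - 1 ≠ 0 := by
    exact_mod_cast (show (k : ℤ) - j - 1 ≠ 0 by have := mem_range.1 hj; omega)
  positivity

lemma remainderScale_self (hk : 1 ≤ k) : remainderScale k k = 0 :=
  prod_eq_zero (mem_range.2 (Nat.sub_one_lt_of_lt hk)) (by simp [Nat.cast_sub hk])

lemma remainderScale_succ_mul (k m : ℕ) :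
    remainderScale k (m + 1) * ((2 * m + 1) * (2 * k - 2 * m - 1)) =
      remainderScale k m * (4 * (m + 1) * (k - m - 1)) := by
  rw [remainderScale_succ, mul_assoc, div_mul_cancel₀ _ (two_mul_add_one_mul_ne_zero k m)]

lemma vRat_succ_mul {i : ℕ} (hi₁ : 1 ≤ i) (hi₂ : i < 2 * k) (h : vRat k i ≠ 0) :
    vRat k (i + 1) * vRat k i * (i * (2 * k - i)) = (2 * k - 2 * i - 1) * (2 * k - 2 * i + 1) := by
  obtain ⟨j, rfl⟩ : ∃ j, i = j + 1 := ⟨i - 1, by omega⟩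
  have hj : 2 * (k : ℚ) - (j + 1) ≠ 0 := by
    exact_mod_cast (show 2 * (k : ℤ) - (j + 1) ≠ 0 by omega)
  simp only [vRat]
  push_cast
  field_simp

lemma vRat_two_mul_add_two (hm : m < k)
    (hodd : vRat k (2 * m + 1) * remainderScale k m = 2 * k - 1 - 4 * m) :
    vRat k (2 * m + 2) * ((2 * m + 1) * (2 * k - 2 * m - 1)) =
      remainderScale k m * (2 * k - 4 * m - 3) := by
  have hA : 2 * (k : ℚ) - 1 - 4 * m ≠ 0 := by
    exact_mod_cast (show 2 * (k : ℤ) - 1 - 4 * m ≠ 0 by omega)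
  have hv := vRat_succ_mul (by omega) (by omega) (left_ne_zero_of_mul (hodd ▸ hA))
  push_cast at hv
  apply mul_right_cancel₀ hA
  linear_combination remainderScale k m * hv -
    vRat k (2 * m + 2) * ((2 * m + 1) * (2 * k - 2 * m - 1)) * hodd

lemma vRat_two_mul_add_three (hm : m + 1 < k)
    (heven : vRat k (2 * m + 2) * ((2 * m + 1) * (2 * k - 2 * m - 1)) =
      remainderScale k m * (2 * k - 4 * m - 3)) :
    vRat k (2 * m + 3) * remainderScale k (m + 1) = 2 * k - 1 - 4 * (m + 1) := by
  have hF : remainderScale k m * (2 * k - 4 * m - 3) ≠ 0 :=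
    mul_ne_zero (remainderScale_ne_zero (by omega))
      (by exact_mod_cast (show 2 * (k : ℤ) - 4 * m - 3 ≠ 0 by omega))
  have hv := vRat_succ_mul (k := k) (i := 2 * m + 2) (by omega) (by omega)
    (left_ne_zero_of_mul (heven ▸ hF))
  push_cast at hv
  apply mul_right_cancel₀ (mul_ne_zero (two_mul_add_one_mul_ne_zero k m) hF)
  linear_combination vRat k (2 * m + 3) * (remainderScale k m * (2 * k - 4 * m - 3)) *
      remainderScale_succ_mul k m -
    vRat k (2 * m + 3) * remainderScale k m * (4 * (m + 1) * (k - m - 1)) * heven +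
    remainderScale k m * ((2 * m + 1) * (2 * k - 2 * m - 1)) * hv

lemma vRat_mul_remainderScale (hm : m < k) :
    vRat k (2 * m + 1) * remainderScale k m = 2 * k - 1 - 4 * m ∧
      vRat k (2 * m + 2) * ((2 * m + 1) * (2 * k - 2 * m - 1)) =
        remainderScale k m * (2 * k - 4 * m - 3) := by
  induction m with
  | zero =>
    have hodd : vRat k 1 * remainderScale k 0 = 2 * k - 1 - 4 * (0 : ℕ) := by simp [vRat]
    exact ⟨hodd, vRat_two_mul_add_two hm hodd⟩
  | succ m ih =>
    have hodd := vRat_two_mul_add_three hm (ih (by omega)).2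
    exact ⟨by exact_mod_cast hodd, vRat_two_mul_add_two hm (by exact_mod_cast hodd)⟩

lemma vRat_ne_zero {i : ℕ} (hi₁ : 1 ≤ i) (hi₂ : i ≤ 2 * k) : vRat k i ≠ 0 := by
  obtain ⟨m, rfl | rfl⟩ : ∃ m, i = 2 * m + 1 ∨ i = 2 * m + 2 := ⟨(i - 1) / 2, by omega⟩
  · have h : 2 * (k : ℚ) - 1 - 4 * m ≠ 0 := by
      exact_mod_cast (show 2 * (k : ℤ) - 1 - 4 * m ≠ 0 by omega)
    have hm : m < k := by omega
    exact left_ne_zero_of_mul ((vRat_mul_remainderScale hm).1 ▸ h)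
  · have h : 2 * (k : ℚ) - 4 * m - 3 ≠ 0 := by
      exact_mod_cast (show 2 * (k : ℤ) - 4 * m - 3 ≠ 0 by omega)
    have hm : m < k := by omega
    exact left_ne_zero_of_mul
      ((vRat_mul_remainderScale hm).2 ▸ mul_ne_zero (remainderScale_ne_zero hm) h)

end Coefficients

section Remainders

variable {k m : ℕ}

lemma half_add_natCast_ne_zero (j : ℕ) : (1 / 2 : ℚ) + j ≠ 0 := by positivity

def evenRemainder (k m : ℕ) : ℚ[X] :=
  C ((-1) ^ k) * expand ℚ 2 (hyperPoly ((m : ℚ) - k) (1 / 2 - m) (1 / 2) (k + 1))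

def oddRemainder (k m : ℕ) : ℚ[X] :=
  C ((-1) ^ (k + 1) * remainderScale k m) * X *
    expand ℚ 2 (hyperPoly ((m : ℚ) - k + 1) (1 / 2 - m) (1 / 2 + 1) k)

lemma evenRemainder_succ (k m : ℕ) :
    evenRemainder k (m + 1) =
      C ((-1) ^ k) * expand ℚ 2 (hyperPoly ((m : ℚ) - k + 1) (1 / 2 - m - 1) (1 / 2) (k + 1)) := by
  rw [evenRemainder, show ((m + 1 : ℕ) : ℚ) - k = (m : ℚ) - k + 1 by push_cast; ring,
    show (1 / 2 : ℚ) - ((m + 1 : ℕ) : ℚ) = 1 / 2 - m - 1 by push_cast; ring]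

lemma oddRemainder_succ (k m : ℕ) :
    oddRemainder k (m + 1) =
      C ((-1) ^ (k + 1) * remainderScale k (m + 1)) * X *
        expand ℚ 2 (hyperPoly ((m : ℚ) - k + 1 + 1) (1 / 2 - m - 1) (1 / 2 + 1) k) := by
  rw [oddRemainder, show ((m + 1 : ℕ) : ℚ) - k + 1 = (m : ℚ) - k + 1 + 1 by push_cast; ring,
    show (1 / 2 : ℚ) - ((m + 1 : ℕ) : ℚ) = 1 / 2 - m - 1 by push_cast; ring]

lemma evenRemainder_eq_add (hm : m < k) :
    evenRemainder k m =
      C (vRat k (2 * m + 1)) * X * oddRemainder k m + evenRemainder k (m + 1) := by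
  have h := congrArg (expand ℚ 2)
    (hyperPoly_contiguous_ab half_add_natCast_ne_zero ((m : ℚ) - k) (1 / 2 - m) k)
  rw [map_mul (expand ℚ 2), map_mul (expand ℚ 2), map_mul (expand ℚ 2), map_sub (expand ℚ 2),
    expand_C, expand_C, expand_X] at h
  have hscalar : C ((-1 : ℚ) ^ k) * C ((m : ℚ) - k - (1 / 2 - m) + 1) =
      C (1 / 2) * C (vRat k (2 * m + 1)) * C ((-1) ^ (k + 1) * remainderScale k m) := by
    simp only [← map_mul]
    congr 1
    linear_combination (1 / 2 * (-1) ^ k) * (vRat_mul_remainderScale hm).1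
  rw [evenRemainder_succ, evenRemainder, oddRemainder]
  apply mul_left_cancel₀ (C_ne_zero.2 (by norm_num : (1 / 2 : ℚ) ≠ 0))
  linear_combination C ((-1 : ℚ) ^ k) * h +
    X ^ 2 * expand ℚ 2 (hyperPoly ((m : ℚ) - k + 1) (1 / 2 - m) (1 / 2 + 1) k) * hscalar

lemma oddRemainder_eq_add (hm : m < k) :
    oddRemainder k m =
      C (vRat k (2 * m + 2)) * X * evenRemainder k (m + 1) + oddRemainder k (m + 1) := by
  have h := congrArg (expand ℚ 2)
    (hyperPoly_contiguous_bc half_add_natCast_ne_zero ((m : ℚ) - k + 1) (1 / 2 - m - 1) k)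
  rw [sub_add_cancel, map_add (expand ℚ 2), map_mul (expand ℚ 2), map_mul (expand ℚ 2),
    map_mul (expand ℚ 2), expand_C, expand_C, expand_C] at h
  have hmk : (m : ℚ) + 1 ≤ k := by exact_mod_cast hm
  have hβ : (1 / 2 - m - 1) * ((m : ℚ) - k + 1 - 1 / 2) ≠ 0 := by
    have : (0 : ℚ) ≤ m := m.cast_nonneg
    exact mul_ne_zero (by linarith) (by linarith)
  have hcast : ((k - m - 1 : ℕ) : ℚ) = k - m - 1 := by
    rw [Nat.sub_sub, Nat.cast_sub (by omega)]
    push_cast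
    ring
  have hscalar₁ : C ((-1) ^ (k + 1) * remainderScale k m) *
        C (1 / 2 * ((m : ℚ) - k + 1 - (1 / 2 - m - 1))) =
      C ((1 / 2 - m - 1) * ((m : ℚ) - k + 1 - 1 / 2)) * C (vRat k (2 * m + 2)) * C ((-1) ^ k) := by
    simp only [← map_mul]
    congr 1
    linear_combination (-(-1) ^ k / 4) * (vRat_mul_remainderScale hm).2
  have hscalar₂ : C ((-1) ^ (k + 1) * remainderScale k m) *
        C (((m : ℚ) - k + 1) * (1 / 2 - m - 1 - 1 / 2)) =
      C ((1 / 2 - m - 1) * ((m : ℚ) - k + 1 - 1 / 2)) *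
        C ((-1) ^ (k + 1) * remainderScale k (m + 1)) := by
    simp only [← map_mul]
    congr 1
    linear_combination ((-1) ^ k / 4) * remainderScale_succ_mul k m
  rw [evenRemainder_succ, oddRemainder_succ, oddRemainder,
    hyperPoly_succ_of_hyperTerm_eq_zero (hyperTerm_eq_zero_of_add_eq_zero (n := k - m - 1)
      (by rw [hcast]; ring) (by omega) _ _)]
  apply mul_left_cancel₀ (C_ne_zero.2 hβ)
  linear_combination C ((-1) ^ (k + 1) * remainderScale k m) * X * h +
    X * expand ℚ 2 (hyperPoly ((m : ℚ) - k + 1) (1 / 2 - m - 1) (1 / 2) k) * hscalar₁ +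
    X * expand ℚ 2 (hyperPoly ((m : ℚ) - k + 1 + 1) (1 / 2 - m - 1) (1 / 2 + 1) k) * hscalar₂

lemma evenRemainder_zero (k : ℕ) : evenRemainder k 0 = PRat k := by
  rw [evenRemainder, PRat, sub_pow, hyperPoly, map_sum, mul_sum, Nat.cast_zero, zero_sub, sub_zero]
  refine sum_congr rfl fun i _ => ?_
  rw [hyperTerm_neg_natCast_self half_add_natCast_ne_zero]
  simp only [map_mul, map_pow, map_neg, map_one, map_natCast, expand_X, one_pow, mul_one]
  ring

lemma oddRemainder_zero (hk : 1 ≤ k) : oddRemainder k 0 = QRat k := by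
  have hn : ((0 : ℕ) : ℚ) - k + 1 = -((k - 1 : ℕ) : ℚ) := by
    rw [Nat.cast_sub hk]
    push_cast
    ring
  rw [oddRemainder, QRat, hyperPoly, map_sum, mul_sum, hn, Nat.cast_zero, sub_zero,
    remainderScale_zero, mul_one]
  refine sum_congr rfl fun i hi => ?_
  have hsign : (-1 : ℚ) ^ (k - 1 - i) = (-1) ^ (k + 1) * (-1) ^ i := by
    rw [← pow_add, show k + 1 + i = k - 1 - i + 2 * (i + 1) by have := mem_range.1 hi; omega,
      pow_add, pow_mul, neg_one_sq, one_pow, mul_one]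
  have hterm : hyperTerm (-((k - 1 : ℕ) : ℚ)) (1 / 2) (1 / 2 + 1) i =
      (-1) ^ i * (k - 1).choose i * (2 * (i : ℚ) + 1)⁻¹ := by
    have h := mul_hyperTerm_lower_add_one half_add_natCast_ne_zero (-((k - 1 : ℕ) : ℚ)) (1 / 2) i
    rw [hyperTerm_neg_natCast_self half_add_natCast_ne_zero] at h
    rw [eq_mul_inv_iff_mul_eq₀ (by positivity)]
    linear_combination 2 * h
  rw [hterm, hsign]
  simp only [map_mul, map_pow, expand_C, expand_X]
  ring

lemma evenRemainder_ne_zero (k m : ℕ) : evenRemainder k m ≠ 0 :=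
  mul_ne_zero (C_ne_zero.2 (pow_ne_zero _ (by norm_num)))
    ((expand_eq_zero two_pos).not.2 (hyperPoly_ne_zero _ _ _ _))

lemma oddRemainder_ne_zero (hm : m < k) : oddRemainder k m ≠ 0 := by
  obtain ⟨n, rfl⟩ : ∃ n, k = n + 1 := ⟨k - 1, by omega⟩
  refine mul_ne_zero (mul_ne_zero (C_ne_zero.2 ?_) X_ne_zero)
    ((expand_eq_zero two_pos).not.2 (hyperPoly_ne_zero _ _ _ _))
  exact mul_ne_zero (pow_ne_zero _ (by norm_num)) (remainderScale_ne_zero hm)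

lemma oddRemainder_self (hk : 1 ≤ k) : oddRemainder k k = 0 := by
  simp [oddRemainder, remainderScale_self hk]

end Remainders

section RemainderSequence

def remainder (k : ℕ) : ℕ → ℚ[X]
  | 0 => PRat k
  | 1 => QRat k
  | j + 2 => remainder k j - C (vRat k (j + 1)) * X * remainder k (j + 1)

variable {k m : ℕ}

lemma remainder_eq_add (k j : ℕ) :
    remainder k j = C (vRat k (j + 1)) * X * remainder k (j + 1) + remainder k (j + 2) := by
  rw [remainder]
  ring

lemma remainder_two_mul (hk : 1 ≤ k) (hm : m ≤ k) :
    remainder k (2 * m) = evenRemainder k m ∧ remainder k (2 * m + 1) = oddRemainder k m := by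
  induction m with
  | zero => exact ⟨(evenRemainder_zero k).symm, (oddRemainder_zero hk).symm⟩
  | succ m ih =>
    obtain ⟨he, ho⟩ := ih (by omega)
    have he' : remainder k (2 * m + 2) = evenRemainder k (m + 1) := by
      have h := remainder_eq_add k (2 * m)
      rw [he, ho, evenRemainder_eq_add (by omega)] at h
      exact (add_left_cancel h).symm
    have ho' : remainder k (2 * m + 3) = oddRemainder k (m + 1) := by
      have h := remainder_eq_add k (2 * m + 1)
      rw [ho, show 2 * m + 1 + 1 = 2 * m + 2 from rfl, he', oddRemainder_eq_add (by omega)] at h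
      exact (add_left_cancel h).symm
    exact ⟨he', ho'⟩

lemma remainder_ne_zero (hk : 1 ≤ k) {j : ℕ} (hj : j ≤ 2 * k) : remainder k j ≠ 0 := by
  obtain ⟨m, rfl | rfl⟩ : ∃ m, j = 2 * m ∨ j = 2 * m + 1 := ⟨j / 2, by omega⟩
  · rw [(remainder_two_mul hk (by omega)).1]
    exact evenRemainder_ne_zero k m
  · rw [(remainder_two_mul hk (by omega)).2]
    exact oddRemainder_ne_zero (by omega)

lemma remainder_two_mul_add_one_self (hk : 1 ≤ k) : remainder k (2 * k + 1) = 0 := by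
  rw [(remainder_two_mul hk le_rfl).2, oddRemainder_self hk]

end RemainderSequence

/-- For every `k ≥ 1`, `P_k/Q_k = [v_{1,k} T, …, v_{2k,k} T]` holds in `ℚ(T)`;
in particular every `v_{i,k}` (`1 ≤ i ≤ 2k`) is a nonzero rational number. -/
theorem statement0 (k : ℕ) (hk : 1 ≤ k) :
    (∀ i, 1 ≤ i → i ≤ 2 * k → vRat k i ≠ 0) ∧
    algebraMap (Polynomial ℚ) (RatFunc ℚ) (PRat k) /
        algebraMap (Polynomial ℚ) (RatFunc ℚ) (QRat k) =
      cfl ((List.range (2 * k)).map fun i => RatFunc.C (vRat k (i + 1)) * RatFunc.X) := by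
  refine ⟨fun i hi₁ hi₂ => vRat_ne_zero hi₁ hi₂, Eq.symm ?_⟩
  refine cfl_map_range_eq_div _ (fun j => algebraMap ℚ[X] (RatFunc ℚ) (remainder k j)) (2 * k)
    (fun j _ hj => RatFunc.algebraMap_ne_zero (remainder_ne_zero hk hj)) ?_ fun j _ => ?_
  · rw [remainder_two_mul_add_one_self hk, map_zero]
  · rw [remainder_eq_add k j, map_add, map_mul, map_mul, RatFunc.algebraMap_C, RatFunc.algebraMap_X]
end
end

section
/- For every integer k ≥ 1 one has Q_k(1) = −(2kθ_k)^{−1} in ℚ, and the symmetry v_{2k+1−i,k} = v_{i,k}·ω_k^{(−1)^{i+1}} holds for 1 ≤ i ≤ 2k (that is, v_{2k+1−i,k} = v_{i,k}ω_k when i is odd and v_{2k+1−i,k} = v_{i,k}ω_k^{−1} when i is even). -/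
/-!
Let `D n = C(2n,n) / 4^n`, so that `θ_k = (-1)^k D k` and `(2n+2) D (n+1) = (2n+1) D n`.

Writing `n = k - 1`, `Q_k(1) = (-1)^n ∑_{i ≤ n} (-1)^i C(n,i) / (2i+1)`, and the partial
fraction expansion of `n! bⁿ / ∏_{i ≤ n} (a + b i)` evaluates this alternating sum as
`1 / ((2n+1) D n)`.

The factor `r i = (2k-2i-1)(2k-2i+1) / (i(2k-i))` of the recurrence `v (i+1) v i = r i` is
invariant under `i ↦ 2k - i` and never vanishes, so `i ↦ v (2k+1-i)` satisfies the same
recurrence as `v`. Hence `v (2k+1-i) / v i` alternates between `γ` and `γ⁻¹`, where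
`v (2k) = v 1 * γ`, and a closed formula for `v` at even indices gives `γ = ω_k`.
-/

open Polynomial

noncomputable section

/-- `θ_k = (-1)^k 2^(-2k) C(2k,k)`. -/
def thetaRat (k : ℕ) : ℚ := (-1) ^ k * ((2 : ℚ) ^ (2 * k))⁻¹ * (Nat.choose (2 * k) k : ℚ)

/-- `ω_k = -(2kθ_k)⁻²`. -/
def omegaRat (k : ℕ) : ℚ := -((2 * (k : ℚ)) * thetaRat k)⁻¹ ^ 2

open Finset Nat

theorem sum_range_neg_one_pow_mul_choose_div {K : Type*} [Field K] (n : ℕ) (a b : K)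
    (h : ∀ i ≤ n, a + b * i ≠ 0) :
    ∑ i ∈ range (n + 1), (-1) ^ i * (n.choose i : K) / (a + b * i) =
      n ! * b ^ n / ∏ i ∈ range (n + 1), (a + b * i) := by
  induction n generalizing a with
  | zero => simp
  | succ n ih =>
    have shift : ∀ i : ℕ, a + b * ↑(i + 1) = (a + b) + b * i := fun i => by push_cast; ring
    have pascal : ∑ i ∈ range (n + 2), (-1) ^ i * ((n + 1).choose i : K) / (a + b * i) =
        ∑ i ∈ range (n + 1), (-1) ^ i * (n.choose i : K) / (a + b * i) -
          ∑ i ∈ range (n + 1), (-1) ^ i * (n.choose i : K) / ((a + b) + b * i) := by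
      rw [sub_eq_add_neg, ← sum_neg_distrib]
      convert sum_choose_succ_mul (fun i _ => (-1 : K) ^ i / (a + b * i)) n using 2
      · ring
      · exact sum_congr rfl fun i _ => by ring
      · exact sum_congr rfl fun i _ => by rw [shift]; ring
    rw [pascal, ih a fun i hi => h i (by omega),
      ih (a + b) fun i hi => shift i ▸ h (i + 1) (by omega)]
    have last : ∏ i ∈ range (n + 2), (a + b * i) =
        (∏ i ∈ range (n + 1), (a + b * i)) * (a + b * (n + 1)) := by
      rw [prod_range_succ]; push_cast; ring
    have first : ∏ i ∈ range (n + 2), (a + b * i) =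
        (∏ i ∈ range (n + 1), ((a + b) + b * i)) * a := by
      rw [prod_range_succ']; simp only [shift, Nat.cast_zero, mul_zero, add_zero]
    have hn : a + b * (n + 1) ≠ 0 := by exact_mod_cast h (n + 1) le_rfl
    have h0 : a ≠ 0 := by simpa using h 0 (by omega)
    have hX : ∏ i ∈ range (n + 2), (a + b * i) ≠ 0 :=
      prod_ne_zero_iff.mpr fun i hi => h i (Nat.lt_succ_iff.mp (mem_range.mp hi))
    rw [eq_div_of_mul_eq hn last.symm, eq_div_of_mul_eq h0 first.symm]
    field_simp
    push_cast [Nat.factorial_succ]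
    ring

theorem reflect_eq_mul_zpow_of_recurrence {K : Type*} [Field K] {v r : ℕ → K} {N : ℕ} {c : K}
    (hv : ∀ i, 1 ≤ i → i < N → v (i + 1) = r i / v i)
    (hr : ∀ i, 1 ≤ i → i < N → r (N - i) = r i)
    (hr0 : ∀ i, 1 ≤ i → i < N → r i ≠ 0)
    (hN : v N = v 1 * c) {i : ℕ} (h1 : 1 ≤ i) (hi : i ≤ N) :
    v (N + 1 - i) = v i * c ^ ((-1 : ℤ) ^ (i + 1)) := by
  induction i, h1 using Nat.le_induction with
  | base => simpa using hN
  | succ i h1 ih =>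
    -- the recurrence at `N - i`, read through the symmetry of `r`, gives `v (N - i)`
    have hrec := hv (N - i) (by omega) (by omega)
    rw [show N - i + 1 = N + 1 - i by omega, hr i h1 (by omega), ih (by omega)] at hrec
    rw [show N + 1 - (i + 1) = N - i by omega,
      ← div_div_cancel₀ (hr0 i h1 (by omega)) (b := v (N - i)), ← hrec, hv i h1 (by omega),
      pow_succ (-1 : ℤ) (i + 1), mul_neg_one, zpow_neg, div_mul_eq_div_div, div_eq_mul_inv]

def centralBinomRatio (n : ℕ) : ℚ := n.centralBinom / 4 ^ n

local notation "D" => centralBinomRatio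

lemma centralBinomRatio_zero : D 0 = 1 := by simp [centralBinomRatio]

lemma centralBinomRatio_pos (n : ℕ) : 0 < D n :=
  div_pos (by exact_mod_cast n.centralBinom_pos) (by positivity)

lemma centralBinomRatio_succ (n : ℕ) :
    D (n + 1) = (2 * n + 1) / (2 * n + 2) * D n := by
  have h : ((n : ℚ) + 1) * (n + 1).centralBinom = 2 * (2 * n + 1) * n.centralBinom := by
    exact_mod_cast n.succ_mul_centralBinom_succ
  simp only [centralBinomRatio, pow_succ]
  field_simp
  linear_combination 2 * h

lemma thetaRat_eq (k : ℕ) : thetaRat k = (-1) ^ k * D k := by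
  rw [thetaRat, centralBinomRatio, pow_mul, Nat.centralBinom]
  norm_num [div_eq_mul_inv]
  ring

lemma omegaRat_eq (k : ℕ) : omegaRat k = -((2 * k * D k) ^ 2)⁻¹ := by
  rw [omegaRat, thetaRat_eq, inv_pow, mul_left_comm, mul_pow ((-1 : ℚ) ^ k), ← pow_mul,
    mul_comm k, pow_mul, neg_one_sq, one_pow, one_mul]

lemma prod_range_one_add_two_mul (n : ℕ) :
    ∏ i ∈ range (n + 1), (1 + 2 * (i : ℚ)) = n ! * 2 ^ n * ((2 * n + 1) * D n) := by
  induction n with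
  | zero => simp [centralBinomRatio_zero]
  | succ n ih =>
    rw [prod_range_succ, ih, centralBinomRatio_succ]
    push_cast [Nat.factorial_succ]
    field_simp
    ring

lemma sum_range_neg_one_pow_mul_choose_div_one_add_two_mul (n : ℕ) :
    ∑ i ∈ range (n + 1), (-1) ^ i * (n.choose i : ℚ) / (1 + 2 * i) =
      ((2 * n + 1) * D n)⁻¹ := by
  rw [sum_range_neg_one_pow_mul_choose_div n 1 2 fun i _ => by positivity,
    prod_range_one_add_two_mul]
  have := (centralBinomRatio_pos n).ne'
  field_simp

lemma eval_one_QRat_succ (n : ℕ) :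
    (QRat (n + 1)).eval 1 = (-1) ^ n * ((2 * n + 1) * D n)⁻¹ := by
  rw [← sum_range_neg_one_pow_mul_choose_div_one_add_two_mul, mul_sum]
  simp only [QRat, eval_finsetSum, eval_mul, eval_C, eval_pow, eval_X, one_pow, mul_one,
    Nat.add_sub_cancel]
  refine sum_congr rfl fun i hi => ?_
  rw [pow_sub₀ _ (by norm_num) (Nat.lt_succ_iff.mp (mem_range.mp hi)), ← inv_pow, inv_neg_one]
  ring

lemma eval_one_QRat {k : ℕ} (hk : 1 ≤ k) : (QRat k).eval 1 = -((2 * k) * thetaRat k)⁻¹ := by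
  obtain ⟨n, rfl⟩ : ∃ n, k = n + 1 := ⟨k - 1, by omega⟩
  rw [eval_one_QRat_succ, thetaRat_eq, pow_succ, centralBinomRatio_succ]
  have := (centralBinomRatio_pos n).ne'
  simp only [mul_inv, ← inv_pow, inv_neg]
  push_cast
  field_simp

def vFactor (k i : ℕ) : ℚ := (2 * k - 2 * i - 1) * (2 * k - 2 * i + 1) / (i * (2 * k - i))

lemma vRat_add_two (k i : ℕ) : vRat k (i + 2) = vFactor k (i + 1) / vRat k (i + 1) := by
  rw [vRat, vFactor]
  push_cast
  rfl

lemma vRat_add_three (k i : ℕ) :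
    vRat k (i + 3) = vFactor k (i + 2) * vRat k (i + 1) / vFactor k (i + 1) := by
  rw [vRat_add_two, vRat_add_two, div_div_eq_mul_div]

lemma vFactor_two_mul_sub (k i : ℕ) (hi : i ≤ 2 * k) : vFactor k (2 * k - i) = vFactor k i := by
  rw [vFactor, vFactor, Nat.cast_sub hi]
  push_cast
  ring

lemma vFactor_ne_zero (k i : ℕ) (h1 : 1 ≤ i) (hi : i < 2 * k) : vFactor k i ≠ 0 := by
  have hi' : (i : ℚ) < 2 * k := by exact_mod_cast hi
  have h1' : (1 : ℚ) ≤ i := by exact_mod_cast h1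
  refine div_ne_zero (mul_ne_zero ?_ ?_) (by nlinarith)
  · exact_mod_cast (by omega : (2 * (k : ℤ) - 2 * i - 1) ≠ 0)
  · exact_mod_cast (by omega : (2 * (k : ℤ) - 2 * i + 1) ≠ 0)

lemma vRat_two_mul_add_two_s1 {k j l : ℕ} (hk : k = j + l + 1) :
    vRat k (2 * j + 2) = (2 * l - 2 * j - 1) * D l / ((2 * j + 1) * D j * (2 * k * D k)) := by
  induction j generalizing l with
  | zero =>
    subst hk
    have hv2 : vRat (l + 1) 2 = (2 * l - 1) / (2 * l + 1) := by
      rw [vRat_add_two, vFactor, vRat]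
      push_cast
      rw [show 2 * ((l : ℚ) + 1) - 1 = 2 * l + 1 by ring]
      field_simp
      ring
    rw [Nat.zero_add, hv2, centralBinomRatio_succ, centralBinomRatio_zero]
    have := (centralBinomRatio_pos l).ne'
    push_cast
    field_simp
    ring
  | succ j ih =>
    subst hk
    have hr3 : vFactor (j + 1 + l + 1) (2 * j + 3) =
        (2 * l - 2 * j - 3) * (2 * l - 2 * j - 1) / ((2 * j + 3) * (2 * l + 1)) := by
      rw [vFactor]; push_cast; ring
    have hr2 : vFactor (j + 1 + l + 1) (2 * j + 2) =
        (2 * l - 2 * j - 1) * (2 * l - 2 * j + 1) / ((2 * j + 2) * (2 * l + 2)) := by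
      rw [vFactor]; push_cast; ring
    rw [show 2 * (j + 1) + 2 = 2 * j + 1 + 3 by ring, vRat_add_three,
      show 2 * j + 1 + 1 = 2 * j + 2 by ring, ih (l := l + 1) (by ring), hr3, hr2,
      centralBinomRatio_succ j, centralBinomRatio_succ l]
    push_cast
    rw [show 2 * ((l : ℚ) + 1) - 2 * j - 1 = 2 * l - 2 * j + 1 by ring]
    have := (centralBinomRatio_pos l).ne'
    have := (centralBinomRatio_pos j).ne'
    have := (centralBinomRatio_pos (j + 1 + l + 1)).ne'
    have hx : (2 * (l : ℚ) - 2 * j - 1) ≠ 0 := by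
      exact_mod_cast (by omega : (2 * (l : ℤ) - 2 * j - 1) ≠ 0)
    have hy : (2 * (l : ℚ) - 2 * j + 1) ≠ 0 := by
      exact_mod_cast (by omega : (2 * (l : ℤ) - 2 * j + 1) ≠ 0)
    rw [div_eq_iff (div_ne_zero (mul_ne_zero hx hy) (by positivity))]
    field_simp
    ring

lemma vRat_two_mul (k : ℕ) (hk : 1 ≤ k) : vRat k (2 * k) = vRat k 1 * omegaRat k := by
  obtain ⟨n, rfl⟩ : ∃ n, k = n + 1 := ⟨k - 1, by omega⟩
  rw [show 2 * (n + 1) = 2 * n + 2 by ring, vRat_two_mul_add_two_s1 (j := n) (l := 0) rfl,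
    omegaRat_eq, vRat, centralBinomRatio_succ n, centralBinomRatio_zero]
  have := (centralBinomRatio_pos n).ne'
  push_cast
  field_simp
  ring

lemma vRat_two_mul_add_one_sub {k i : ℕ} (hk : 1 ≤ k) (h1 : 1 ≤ i) (hi : i ≤ 2 * k) :
    vRat k (2 * k + 1 - i) = vRat k i * omegaRat k ^ ((-1 : ℤ) ^ (i + 1)) := by
  refine reflect_eq_mul_zpow_of_recurrence (fun i h1 _ => ?_)
    (fun i _ hi => vFactor_two_mul_sub k i hi.le) (vFactor_ne_zero k) (vRat_two_mul k hk) h1 hi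
  obtain ⟨j, rfl⟩ : ∃ j, i = j + 1 := ⟨i - 1, by omega⟩
  exact vRat_add_two k j

/-- For every `k ≥ 1`, `Q_k(1) = -(2kθ_k)⁻¹` and `v_{2k+1-i,k} = v_{i,k} ω_k^((-1)^(i+1))`
for `1 ≤ i ≤ 2k`. -/
theorem statement1 (k : ℕ) (hk : 1 ≤ k) :
    Polynomial.eval (1 : ℚ) (QRat k) = -((2 * (k : ℚ)) * thetaRat k)⁻¹ ∧
    ∀ i, 1 ≤ i → i ≤ 2 * k →
      vRat k (2 * k + 1 - i) = vRat k i * omegaRat k ^ ((-1 : ℤ) ^ (i + 1)) :=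
  ⟨eval_one_QRat hk, fun _ h1 hi => vRat_two_mul_add_one_sub hk h1 hi⟩
end
end

section
/- Let p be an odd prime, t ≥ 1, r = p^t and k ∈ E(r). Then for every integer i with 1 ≤ i ≤ 2k−1, the p-adic valuations satisfy v_p(i) = v_p(2k−2i+1) and v_p(2k−i) = v_p(2k−2i−1). -/
/-!
Write `N = 2k + 1`. From `k ∈ E(p^t)` we get `N = (2m + 1) p^l` with `2m + 1 ≤ p`, so
`p^l ∣ N ≤ p^(l+1)`. Both claims are instances of `v_p(x) = v_p(N - 2x)` for `0 < x < N` (the second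
with `x = 2k - i`). As `p` is odd, `v_p(x) = v_p(2x)`. Now `x` and `N - 2x` (odd) are nonzero and of
absolute value below `p^(l+1)`, so `v_p(2x), v_p(N - 2x) ≤ l`; since `p^l` divides their sum `N`,
each of the two valuations bounds the other.
-/

/-- `k ∈ E(r)` for `r = p^t`: `k = m p^l + (p^l - 1)/2`, `1 ≤ m ≤ (p-1)/2`, `0 ≤ l ≤ t-1`. -/
def memE (p t k : ℕ) : Prop :=
  ∃ m l : ℕ, 1 ≤ m ∧ m ≤ (p - 1) / 2 ∧ l ≤ t - 1 ∧ k = m * p ^ l + (p ^ l - 1) / 2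

namespace padicValInt

variable {p l : ℕ}

theorem neg (x : ℤ) : padicValInt p (-x) = padicValInt p x := by
  simp [padicValInt]

theorem two_mul_of_ne_two [Fact p.Prime] (hp2 : p ≠ 2) (x : ℤ) :
    padicValInt p (2 * x) = padicValInt p x := by
  rcases eq_or_ne x 0 with rfl | hx
  · simp
  have h2 : padicValInt p 2 = 0 := by
    have : Fact (Nat.Prime 2) := ⟨Nat.prime_two⟩
    exact_mod_cast padicValNat_primes hp2
  rw [padicValInt.mul two_ne_zero hx, h2, zero_add]

theorem le_of_abs_lt_pow {x : ℤ} (hx : x ≠ 0) (h : |x| < (p : ℤ) ^ (l + 1)) :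
    padicValInt p x ≤ l := by
  have h' : x.natAbs < p ^ (l + 1) := by
    rw [← Int.natCast_natAbs] at h
    exact_mod_cast h
  exact Nat.lt_succ_iff.mp
    ((padicValNat_le_nat_log _).trans_lt (Nat.log_lt_of_lt_pow (by simpa using hx) h'))

theorem le_of_pow_dvd_add [Fact p.Prime] {a b : ℤ} (hb : b ≠ 0) (ha : padicValInt p a ≤ l)
    (hab : (p : ℤ) ^ l ∣ a + b) : padicValInt p a ≤ padicValInt p b := by
  have hsum : (p : ℤ) ^ padicValInt p a ∣ a + b := (pow_dvd_pow _ ha).trans hab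
  have hb' : (p : ℤ) ^ padicValInt p a ∣ b := by
    simpa using dvd_sub hsum (padicValInt_dvd a)
  exact ((padicValInt_dvd_iff _ b).mp hb').resolve_left hb

theorem eq_sub_two_mul [Fact p.Prime] (hp2 : p ≠ 2) {N x : ℤ} (hN : Odd N)
    (hdvd : (p : ℤ) ^ l ∣ N) (hNle : N ≤ (p : ℤ) ^ (l + 1)) (hx0 : 0 < x) (hxN : x < N) :
    padicValInt p x = padicValInt p (N - 2 * x) := by
  obtain ⟨n, rfl⟩ := hN
  have hx : padicValInt p (2 * x) ≤ l := by
    rw [two_mul_of_ne_two hp2]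
    exact le_of_abs_lt_pow hx0.ne' (by rw [abs_of_pos hx0]; omega)
  have hy : padicValInt p (2 * n + 1 - 2 * x) ≤ l :=
    le_of_abs_lt_pow (by omega) (by rw [abs_lt]; constructor <;> omega)
  rw [← two_mul_of_ne_two hp2 x]
  refine le_antisymm (le_of_pow_dvd_add (by omega) hx (by rwa [add_sub_cancel]))
    (le_of_pow_dvd_add (by omega) hy (by rwa [sub_add_cancel]))

end padicValInt

theorem pow_dvd_two_mul_add_one_le_pow_succ_of_memE {p t k : ℕ} (hp : Odd p)
    (hk : memE p t k) : ∃ l, p ^ l ∣ 2 * k + 1 ∧ 2 * k + 1 ≤ p ^ (l + 1) := by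
  obtain ⟨m, l, -, hm, -, rfl⟩ := hk
  obtain ⟨s, hs⟩ := hp.pow (n := l)
  have hN : 2 * (m * p ^ l + (p ^ l - 1) / 2) + 1 = (2 * m + 1) * p ^ l := by
    rw [hs, Nat.add_sub_cancel, Nat.mul_div_cancel_left _ two_pos]
    ring
  refine ⟨l, hN ▸ Dvd.intro_left _ rfl, ?_⟩
  rw [hN, pow_succ']
  exact Nat.mul_le_mul_right _ (by have := hp.pos; omega)

theorem statement2_general (p t : ℕ) (hp : p.Prime) (hodd : p ≠ 2)
    (k : ℕ) (hk : memE p t k) :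
    ∀ i : ℕ, 1 ≤ i → i ≤ 2 * k - 1 →
      padicValInt p (i : ℤ) = padicValInt p (2 * (k : ℤ) - 2 * i + 1) ∧
      padicValInt p (2 * (k : ℤ) - i) = padicValInt p (2 * (k : ℤ) - 2 * i - 1) := by
  intro i hi1 hi2
  have : Fact p.Prime := ⟨hp⟩
  obtain ⟨l, hdvd, hle⟩ := pow_dvd_two_mul_add_one_le_pow_succ_of_memE (hp.odd_of_ne_two hodd) hk
  have hN : Odd (2 * (k : ℤ) + 1) := odd_two_mul_add_one _
  have hdvd' : (p : ℤ) ^ l ∣ 2 * k + 1 := by exact_mod_cast hdvd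
  have hle' : 2 * (k : ℤ) + 1 ≤ (p : ℤ) ^ (l + 1) := by exact_mod_cast hle
  constructor
  · rw [show 2 * (k : ℤ) - 2 * i + 1 = 2 * k + 1 - 2 * i by ring]
    exact padicValInt.eq_sub_two_mul hodd hN hdvd' hle' (by omega) (by omega)
  · rw [show 2 * (k : ℤ) - 2 * i - 1 = -(2 * k + 1 - 2 * (2 * k - i)) by ring,
      padicValInt.neg]
    exact padicValInt.eq_sub_two_mul hodd hN hdvd' hle' (by omega) (by omega)

/-- Let `p` be an odd prime, `r = p^t`, `k ∈ E(r)`. For `1 ≤ i ≤ 2k-1` one has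
`v_p(i) = v_p(2k-2i+1)` and `v_p(2k-i) = v_p(2k-2i-1)` (p-adic valuations of integers). -/
theorem statement2 (p t : ℕ) (hp : p.Prime) (hodd : p ≠ 2) (ht : 1 ≤ t)
    (k : ℕ) (hk : memE p t k) :
    ∀ i : ℕ, 1 ≤ i → i ≤ 2 * k - 1 →
      padicValInt p (i : ℤ) = padicValInt p (2 * (k : ℤ) - 2 * i + 1) ∧
      padicValInt p (2 * (k : ℤ) - i) = padicValInt p (2 * (k : ℤ) - 2 * i - 1) :=
  statement2_general p t hp hodd k hk
end

section
/- Let p be an odd prime, t ≥ 1, r = p^t and k ∈ E(r). Then the p-adic valuation of the rational number v_{i,k} is zero for every i with 1 ≤ i ≤ 2k. -/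
open Polynomial

noncomputable section

/-!
Put `N = 2k + 1`. For `k ∈ E(p^t)` we have `N = (2m + 1) p^l` with `2m + 1 ≤ p`, so
`p^s ∣ N < p^(s+1)` for some `s`. For `0 < b < N` this forces `v_p(N - 2b) = v_p(b)`: up to
level `s`, divisibility by `p^n` passes between `N - 2b` and `2b`, and above it neither of the
two (nonzero, of absolute value below `p^(s+1)`) is divisible. The factors in the recursion are
`2k - 2i + 1 = N - 2i` and `2k - 2i - 1 = 2(2k - i) - N`, so numerator and denominator of
`v_{i+1,k} v_{i,k}` have equal valuation, and `v_{1,k} = N - 2` is a `p`-adic unit.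
-/

theorem padicValInt_eq_of_forall_pow_dvd_iff {p : ℕ} (hp : p ≠ 1) {x y : ℤ} (hx : x ≠ 0)
    (hy : y ≠ 0) (h : ∀ n : ℕ, (p : ℤ) ^ n ∣ x ↔ (p : ℤ) ^ n ∣ y) :
    padicValInt p x = padicValInt p y := by
  have key (n : ℕ) : n ≤ padicValInt p x ↔ n ≤ padicValInt p y := by
    simpa [padicValInt_dvd_iff_of_ne_one hp, hx, hy] using h n
  exact le_antisymm ((key _).1 le_rfl) ((key _).2 le_rfl)

theorem padicValInt_sub_two_mul {p : ℕ} (hp : p.Prime) (hp2 : p ≠ 2) {N b : ℤ} {s : ℕ}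
    (hN : Odd N) (hdvd : (p : ℤ) ^ s ∣ N) (hlt : N < (p : ℤ) ^ (s + 1))
    (hb0 : 0 < b) (hbN : b < N) :
    padicValInt p (N - 2 * b) = padicValInt p b := by
  have hNb : N - 2 * b ≠ 0 := fun h => Int.not_even_iff_odd.mpr hN ⟨b, by omega⟩
  refine padicValInt_eq_of_forall_pow_dvd_iff hp.ne_one hNb hb0.ne' fun n => ?_
  rcases le_or_gt n s with hns | hsn
  · have hcop : IsCoprime ((p : ℤ) ^ n) 2 := IsCoprime.pow_left <| by
      exact_mod_cast Nat.isCoprime_iff_coprime.mpr ((Nat.coprime_primes hp Nat.prime_two).mpr hp2)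
    rw [dvd_sub_right ((pow_dvd_pow _ hns).trans hdvd)]
    exact ⟨hcop.dvd_of_dvd_mul_left, fun h => h.mul_left 2⟩
  · have hbig : N < (p : ℤ) ^ n :=
      hlt.trans_le (pow_le_pow_right₀ (by exact_mod_cast hp.one_lt.le) hsn)
    refine iff_of_false (fun h => ?_) (fun h => ?_)
    · have := Int.natAbs_le_of_dvd_ne_zero h hNb
      omega
    · have := Int.le_of_dvd hb0 h
      omega

theorem memE.exists_pow_dvd_and_lt_pow_succ {p t k : ℕ} (hp : Odd p) (hk : memE p t k) :
    ∃ s, p ^ s ∣ 2 * k + 1 ∧ 2 * k + 1 < p ^ (s + 1) := by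
  obtain ⟨m, l, hm1, hmp, -, rfl⟩ := hk
  obtain ⟨c, hc⟩ := hp.pow (n := l)
  have hN : 2 * (m * p ^ l + (p ^ l - 1) / 2) + 1 = (2 * m + 1) * p ^ l := by
    rw [hc, show (2 * c + 1 - 1) / 2 = c by omega]
    ring
  rw [hN]
  have hp1 : 1 < p := by omega
  rcases (show 2 * m + 1 < p ∨ 2 * m + 1 = p by omega) with hlt | heq
  · refine ⟨l, dvd_mul_left _ _, ?_⟩
    rw [pow_succ']
    exact Nat.mul_lt_mul_of_pos_right hlt (by positivity)
  · refine ⟨l + 1, by rw [heq, ← pow_succ'], ?_⟩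
    rw [heq, ← pow_succ']
    exact Nat.pow_lt_pow_right hp1 (by omega)

theorem vRat_succ (k : ℕ) {i : ℕ} (hi : 1 ≤ i) :
    vRat k (i + 1) = ((((2 * k - 2 * i - 1) * (2 * k - 2 * i + 1) : ℤ) : ℚ) /
      ((i * (2 * k - i) : ℤ) : ℚ)) / vRat k i := by
  obtain ⟨j, rfl⟩ := Nat.exists_eq_add_of_le' hi
  simp only [vRat]
  push_cast
  ring

theorem vRat_ne_zero_and_padicValRat_eq_zero {p k : ℕ} [Fact p.Prime]
    (h : ∀ b : ℤ, 0 < b → b < 2 * k + 1 → padicValInt p (2 * k + 1 - 2 * b) = padicValInt p b)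
    {i : ℕ} (hi : 1 ≤ i) (hik : i ≤ 2 * k) : vRat k i ≠ 0 ∧ padicValRat p (vRat k i) = 0 := by
  induction i, hi using Nat.le_induction with
  | base =>
    have hv1 : vRat k 1 = ((2 * k + 1 - 2 * 1 : ℤ) : ℚ) := by simp only [vRat]; push_cast; ring
    rw [hv1, padicValRat.of_int, h 1 one_pos (by omega), padicValInt.one]
    exact ⟨by exact_mod_cast (by omega : (2 * k + 1 - 2 * 1 : ℤ) ≠ 0), rfl⟩
  | succ i hi ih =>
    obtain ⟨hv0, hv⟩ := ih (by omega)
    have hA : padicValInt p (2 * k - 2 * i + 1) = padicValInt p i := by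
      rw [← h i (by omega) (by omega)]
      congr 1; ring
    have hB : padicValInt p (2 * k - 2 * i - 1) = padicValInt p (2 * k - i) := by
      rw [← h (2 * k - i) (by omega) (by omega), padicValInt, padicValInt, ← Int.natAbs_neg]
      congr 2; ring
    have hnumQ : (((2 * k - 2 * i - 1) * (2 * k - 2 * i + 1) : ℤ) : ℚ) ≠ 0 :=
      Int.cast_ne_zero.mpr (mul_ne_zero (by omega) (by omega))
    have hdenQ : ((i * (2 * k - i) : ℤ) : ℚ) ≠ 0 :=
      Int.cast_ne_zero.mpr (mul_ne_zero (by omega) (by omega))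
    rw [vRat_succ k hi]
    refine ⟨div_ne_zero (div_ne_zero hnumQ hdenQ) hv0, ?_⟩
    rw [padicValRat.div (div_ne_zero hnumQ hdenQ) hv0, padicValRat.div hnumQ hdenQ, hv,
      padicValRat.of_int, padicValRat.of_int, padicValInt.mul (by omega) (by omega),
      padicValInt.mul (by omega) (by omega), hA, hB]
    omega

theorem statement3_general (p t : ℕ) (hp : p.Prime) (hodd : p ≠ 2)
    (k : ℕ) (hk : memE p t k) :
    ∀ i, 1 ≤ i → i ≤ 2 * k → vRat k i ≠ 0 ∧ padicValRat p (vRat k i) = 0 := by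
  have : Fact p.Prime := ⟨hp⟩
  obtain ⟨s, hdvd, hlt⟩ := hk.exists_pow_dvd_and_lt_pow_succ (hp.odd_of_ne_two hodd)
  refine fun i hi hik => vRat_ne_zero_and_padicValRat_eq_zero (fun b hb0 hbN => ?_) hi hik
  exact padicValInt_sub_two_mul hp hodd ⟨k, rfl⟩ (by exact_mod_cast hdvd) (by exact_mod_cast hlt)
    hb0 hbN

/-- Let `p` be an odd prime, `r = p^t`, `k ∈ E(r)`. Then the `p`-adic valuation of the
(nonzero) rational number `v_{i,k}` is zero for `1 ≤ i ≤ 2k`. -/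
theorem statement3 (p t : ℕ) (hp : p.Prime) (hodd : p ≠ 2) (ht : 1 ≤ t)
    (k : ℕ) (hk : memE p t k) :
    ∀ i, 1 ≤ i → i ≤ 2 * k → vRat k i ≠ 0 ∧ padicValRat p (vRat k i) = 0 :=
  statement3_general p t hp hodd k hk
end
end

section
/- Let p be an odd prime, t ≥ 1, r = p^t and k ∈ E(r). Then for every integer i with 0 ≤ i ≤ 2k one has s_p(i) + s_p(2k−i) = s_p(2k), where s_p(n) denotes the sum of the base-p digits of n; consequently p does not divide the binomial coefficient C(2k,i) for 0 ≤ i ≤ 2k. -/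
open Polynomial

noncomputable section

/-!
Writing `2k = (p^l - 1) + p^l · 2m` with `2m < p`, the base-`p` expansion of `2k` is `l` digits
`p - 1` under the single digit `2m`. Subtracting any `i ≤ 2k` from such a number never borrows,
so `s_p(i) + s_p(2k - i) = s_p(2k)`; by Legendre–Kummer, `(p - 1) v_p(C(2k, i))` equals
`s_p(i) + s_p(2k - i) - s_p(2k) = 0`.
-/

namespace Nat

variable {p : ℕ}

theorem digits_sum_of_lt {x : ℕ} (hx : x < p) : (p.digits x).sum = x := by
  rcases eq_or_ne x 0 with rfl | hx0
  · simp
  · simp [digits_of_lt p x hx0 hx]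

theorem digits_sum_add_base_pow_mul (hp : 1 < p) {l s : ℕ} (hs : s < p ^ l) (q : ℕ) :
    (p.digits (s + p ^ l * q)).sum = (p.digits s).sum + (p.digits q).sum := by
  rcases eq_or_ne q 0 with rfl | hq
  · simp
  obtain ⟨z, hz⟩ := exists_add_of_le ((digits_length_le_iff hp s).2 hs)
  rw [hz, ← digits_append_zeroes_append_digits hp (pos_of_ne_zero hq)]
  simp

theorem digits_sum_add_digits_sum_base_pow_sub_one_sub (hp : 1 < p) {l s : ℕ} (hs : s < p ^ l) :
    (p.digits s).sum + (p.digits (p ^ l - 1 - s)).sum = l * (p - 1) := by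
  induction l generalizing s with
  | zero => simp_all
  | succ l ih =>
    have hP : 0 < p ^ l := pow_pos (zero_lt_of_lt hp) l
    obtain ⟨b, q, hb, rfl⟩ : ∃ b q, b < p ^ l ∧ s = b + p ^ l * q :=
      ⟨s % p ^ l, s / p ^ l, Nat.mod_lt s hP, (Nat.mod_add_div s _).symm⟩
    have hq : q < p := by
      by_contra! h
      have := Nat.mul_le_mul_left (p ^ l) h
      rw [← pow_succ] at this
      omega
    have hcompl : p ^ l * (p - 1 - q) + p ^ l * q + p ^ l = p ^ (l + 1) := by
      rw [← Nat.mul_add, ← Nat.mul_add_one, pow_succ]; congr 1; omega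
    have hsplit : p ^ (l + 1) - 1 - (b + p ^ l * q) = (p ^ l - 1 - b) + p ^ l * (p - 1 - q) := by
      omega
    rw [hsplit, digits_sum_add_base_pow_mul hp hb, digits_sum_add_base_pow_mul hp (by omega),
      digits_sum_of_lt hq, digits_sum_of_lt (by omega : p - 1 - q < p), Nat.add_one_mul, ← ih hb]
    omega

theorem digits_sum_add_digits_sum_sub_of_le (hp : 1 < p) {a l i : ℕ} (ha : a < p)
    (hi : i ≤ p ^ l - 1 + p ^ l * a) :
    (p.digits i).sum + (p.digits (p ^ l - 1 + p ^ l * a - i)).sum =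
      (p.digits (p ^ l - 1 + p ^ l * a)).sum := by
  have hP : 0 < p ^ l := pow_pos (zero_lt_of_lt hp) l
  obtain ⟨b, q, hb, rfl⟩ : ∃ b q, b < p ^ l ∧ i = b + p ^ l * q :=
    ⟨i % p ^ l, i / p ^ l, Nat.mod_lt i hP, (Nat.mod_add_div i _).symm⟩
  have hq : q ≤ a := by
    by_contra! h
    have := Nat.mul_le_mul_left (p ^ l) h
    rw [Nat.mul_add_one] at this
    omega
  have hcompl : p ^ l * (a - q) + p ^ l * q = p ^ l * a := by
    rw [← Nat.mul_add, Nat.sub_add_cancel hq]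
  have hsub : p ^ l - 1 + p ^ l * a - (b + p ^ l * q) = (p ^ l - 1 - b) + p ^ l * (a - q) := by
    omega
  have hlow := digits_sum_add_digits_sum_base_pow_sub_one_sub hp hb
  have hall := digits_sum_add_digits_sum_base_pow_sub_one_sub hp hP
  rw [digits_zero, List.sum_nil, Nat.sub_zero, Nat.zero_add] at hall
  rw [hsub, digits_sum_add_base_pow_mul hp hb, digits_sum_add_base_pow_mul hp (by omega),
    digits_sum_add_base_pow_mul hp (by omega), digits_sum_of_lt (hq.trans_lt ha),
    digits_sum_of_lt (by omega : a - q < p), digits_sum_of_lt ha]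
  omega

theorem not_dvd_choose_of_digits_sum_add_eq (hp : p.Prime) {n i : ℕ} (hi : i ≤ n)
    (hsum : (p.digits i).sum + (p.digits (n - i)).sum = (p.digits n).sum) :
    ¬ p ∣ n.choose i := by
  have : Fact p.Prime := ⟨hp⟩
  have hv := sub_one_mul_padicValNat_choose_eq_sub_sum_digits (p := p) hi
  rw [hsum, Nat.sub_self, Nat.mul_eq_zero] at hv
  have hv0 : padicValNat p (n.choose i) = 0 := hv.resolve_left (by have := hp.two_le; omega)
  rcases padicValNat.eq_zero_iff.1 hv0 with h | h | h
  · exact absurd h hp.one_lt.ne'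
  · exact absurd h (choose_pos hi).ne'
  · exact h

end Nat

theorem exists_two_mul_eq_of_memE {p t k : ℕ} (hp : Odd p) (hk : memE p t k) :
    ∃ a l, a < p ∧ 2 * k = p ^ l - 1 + p ^ l * a := by
  obtain ⟨m, l, -, hm, -, rfl⟩ := hk
  obtain ⟨c, hc⟩ := hp.pow (n := l)
  refine ⟨2 * m, l, by have := hp.pos; omega, ?_⟩
  rw [hc, show (2 * c + 1) * (2 * m) = 2 * (m * (2 * c + 1)) by ring]
  omega

theorem statement4_general (p t : ℕ) (hp : p.Prime) (hodd : p ≠ 2)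
    (k : ℕ) (hk : memE p t k) :
    ∀ i, i ≤ 2 * k →
      (Nat.digits p i).sum + (Nat.digits p (2 * k - i)).sum = (Nat.digits p (2 * k)).sum ∧
      ¬ p ∣ Nat.choose (2 * k) i := by
  obtain ⟨a, l, ha, hk2⟩ := exists_two_mul_eq_of_memE (hp.odd_of_ne_two hodd) hk
  intro i hi
  have hsum : (p.digits i).sum + (p.digits (2 * k - i)).sum = (p.digits (2 * k)).sum := by
    rw [hk2] at hi ⊢
    exact Nat.digits_sum_add_digits_sum_sub_of_le hp.one_lt ha hi
  exact ⟨hsum, Nat.not_dvd_choose_of_digits_sum_add_eq hp hi hsum⟩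

/-- Let `p` be an odd prime, `r = p^t`, `k ∈ E(r)`. For `0 ≤ i ≤ 2k` one has
`s_p(i) + s_p(2k-i) = s_p(2k)` (sums of base-`p` digits); consequently `p ∤ C(2k,i)`. -/
theorem statement4 (p t : ℕ) (hp : p.Prime) (hodd : p ≠ 2) (ht : 1 ≤ t)
    (k : ℕ) (hk : memE p t k) :
    ∀ i, i ≤ 2 * k →
      (Nat.digits p i).sum + (Nat.digits p (2 * k - i)).sum = (Nat.digits p (2 * k)).sum ∧
      ¬ p ∣ Nat.choose (2 * k) i :=
  statement4_general p t hp hodd k hk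
end
end

section
/- Let u ∈ F_27 be a root of the polynomial X³ + X² − X + 1, irreducible over F_3. Then the algebraic equation X⁴ − TX³ − u³TX + uT² − u⁶ = 0, with coefficients in F_27[T], has exactly one root α in F(27) = F_27((T^{−1})), and this root satisfies |α| = |T|. -/
/-!
Put `t = T⁻¹`, the uniformizer `X` of `F⟦X⟧ ⊆ F⸨X⸩`. Multiplying the equation by `t⁴` and
writing `α = T z` turns it into the monic equation `z⁴ - z³ - u³t²z + ut² - u⁶t⁴ = 0` over `F⟦X⟧`.
Since `F⟦X⟧` is integrally closed in its fraction field `F⸨X⸩`, every root `z` is a power series.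
Reducing mod `t`, its constant term `c` satisfies `c³(c - 1) = 0`; `c = 0` is impossible because
then the coefficient of `t²` is `u`, which is nonzero as `u³ + u² - u + 1 = 0`. At `c = 1` the
derivative is a unit, so Hensel's lemma gives exactly one root, and it has order `0`,
i.e. `|α| = |T|`.
-/

open Polynomial

noncomputable section

/-- The element `T` of `F(q) = F_q((T⁻¹))`, realized as the Laurent series
(in the variable `T⁻¹`) of order `-1`. -/
def Tvar (Fq : Type*) [Field Fq] : LaurentSeries Fq := HahnSeries.single (-1 : ℤ) 1

section PowerSeriesRoot

variable {K : Type*} [Field K] (u : K)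

def scaledQuartic : (PowerSeries K)[X] :=
  X ^ 4 - X ^ 3 - C (PowerSeries.C (u ^ 3) * PowerSeries.X ^ 2) * X +
    C (PowerSeries.C u * PowerSeries.X ^ 2 - PowerSeries.C (u ^ 6) * PowerSeries.X ^ 4)

lemma scaledQuartic_monic : (scaledQuartic u).Monic := by
  unfold scaledQuartic
  monicity!

lemma eval_scaledQuartic (w : PowerSeries K) :
    (scaledQuartic u).eval w = w ^ 4 - w ^ 3 - PowerSeries.C (u ^ 3) * PowerSeries.X ^ 2 * w +
      PowerSeries.C u * PowerSeries.X ^ 2 - PowerSeries.C (u ^ 6) * PowerSeries.X ^ 4 := by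
  simp only [scaledQuartic, eval_add, eval_sub, eval_mul, eval_pow, eval_X, eval_C]
  ring

lemma constantCoeff_eval_scaledQuartic (w : PowerSeries K) :
    PowerSeries.constantCoeff ((scaledQuartic u).eval w) =
      PowerSeries.constantCoeff w ^ 3 * (PowerSeries.constantCoeff w - 1) := by
  simp only [eval_scaledQuartic, map_add, map_sub, map_mul, map_pow, PowerSeries.constantCoeff_C,
    PowerSeries.constantCoeff_X]
  ring

lemma coeff_two_eval_scaledQuartic {w : PowerSeries K} (hw : PowerSeries.constantCoeff w = 0) :
    PowerSeries.coeff 2 ((scaledQuartic u).eval w) = u := by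
  obtain ⟨v, rfl⟩ := PowerSeries.X_dvd_iff.mpr hw
  have : (scaledQuartic u).eval (PowerSeries.X * v) = PowerSeries.X ^ 2 * (PowerSeries.C u +
      PowerSeries.X * (PowerSeries.X * v ^ 4 - v ^ 3 - PowerSeries.C (u ^ 3) * v -
        PowerSeries.C (u ^ 6) * PowerSeries.X)) := by
    rw [eval_scaledQuartic]
    ring
  rw [this, ← zero_add 2, PowerSeries.coeff_X_pow_mul, PowerSeries.coeff_zero_eq_constantCoeff]
  simp

lemma constantCoeff_eq_one_of_isRoot_scaledQuartic {u : K} (hu : u ≠ 0) {w : PowerSeries K}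
    (hw : (scaledQuartic u).IsRoot w) : PowerSeries.constantCoeff w = 1 := by
  have h := constantCoeff_eval_scaledQuartic u w
  rw [hw.eq_zero, map_zero, eq_comm, mul_eq_zero, pow_eq_zero_iff three_ne_zero, sub_eq_zero] at h
  refine h.resolve_left fun h0 => hu ?_
  rw [← coeff_two_eval_scaledQuartic u h0, hw.eq_zero, map_zero]

lemma isUnit_eval_derivative_scaledQuartic {w : PowerSeries K}
    (hw : PowerSeries.constantCoeff w = 1) :
    IsUnit ((derivative (scaledQuartic u)).eval w) := by
  rw [PowerSeries.isUnit_iff_constantCoeff]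
  simp only [scaledQuartic, derivative_add, derivative_sub, derivative_mul, derivative_C,
    derivative_X_pow, derivative_X]
  norm_num [hw, map_ofNat]

lemma existsUnique_isRoot_scaledQuartic {u : K} (hu : u ≠ 0) :
    ∃! w : PowerSeries K, (scaledQuartic u).IsRoot w := by
  have h1 : (scaledQuartic u).eval 1 ∈ Ideal.span {PowerSeries.X} := by
    rw [Ideal.mem_span_singleton, PowerSeries.X_dvd_iff, constantCoeff_eval_scaledQuartic]
    simp
  obtain ⟨w, hw, -⟩ := HenselianRing.is_henselian (scaledQuartic u) (scaledQuartic_monic u) 1 h1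
    ((isUnit_eval_derivative_scaledQuartic u (map_one _)).map _)
  have hw1 := constantCoeff_eq_one_of_isRoot_scaledQuartic hu hw
  refine ⟨w, hw, fun v hv => (IsLocalRing.eq_of_eval_eq_zero_of_not_isUnit_sub hw.eq_zero
    hv.eq_zero ?_ (isUnit_eval_derivative_scaledQuartic u hw1)).symm⟩
  rw [PowerSeries.isUnit_iff_constantCoeff, map_sub, hw1,
    constantCoeff_eq_one_of_isRoot_scaledQuartic hu hv, sub_self]
  exact not_isUnit_zero

end PowerSeriesRoot

section LaurentSeries

variable {K : Type*} [Field K]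

lemma coe_X_mul_Tvar : ((PowerSeries.X : PowerSeries K) : LaurentSeries K) * Tvar K = 1 := by
  rw [PowerSeries.coe_X, Tvar, HahnSeries.single_mul_single]
  simp

lemma coe_ne_zero_of_constantCoeff_ne_zero {w : PowerSeries K}
    (hw : PowerSeries.constantCoeff w ≠ 0) : (w : LaurentSeries K) ≠ 0 :=
  ((PowerSeries.isUnit_iff_constantCoeff.mpr (Ne.isUnit hw)).map _).ne_zero

lemma order_coe_eq_zero {w : PowerSeries K} (hw : PowerSeries.constantCoeff w ≠ 0) :
    (w : LaurentSeries K).order = 0 := by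
  have hcoeff (i : ℤ) : (w : LaurentSeries K).coeff i =
      if i < 0 then 0 else PowerSeries.coeff i.natAbs w := PowerSeries.coeff_coe w i
  refine le_antisymm (HahnSeries.order_le_of_coeff_ne_zero (by simpa [hcoeff] using hw)) ?_
  by_contra! h
  refine HahnSeries.coeff_order_eq_zero.not.mpr (coe_ne_zero_of_constantCoeff_ne_zero hw) ?_
  rw [hcoeff, if_pos h]

lemma aeval_coe_eq_zero_iff {p : (PowerSeries K)[X]} {w : PowerSeries K} :
    aeval (w : LaurentSeries K) p = 0 ↔ p.IsRoot w := by
  rw [← LaurentSeries.coe_algebraMap, aeval_algebraMap_apply, coe_aeval_eq_eval,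
    LaurentSeries.coe_algebraMap, map_eq_zero_iff _ HahnSeries.ofPowerSeries_injective, IsRoot]

lemma exists_coe_eq_of_aeval_eq_zero {p : (PowerSeries K)[X]} (hp : p.Monic)
    {z : LaurentSeries K} (hz : aeval z p = 0) : ∃ w : PowerSeries K, (w : LaurentSeries K) = z :=
  IsIntegrallyClosed.isIntegral_iff.mp ⟨p, hp, hz⟩

def quartic (u : K) (β : LaurentSeries K) : LaurentSeries K :=
  β ^ 4 - Tvar K * β ^ 3 - algebraMap K (LaurentSeries K) (u ^ 3) * Tvar K * β +
    algebraMap K (LaurentSeries K) u * Tvar K ^ 2 - algebraMap K (LaurentSeries K) (u ^ 6)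

lemma aeval_scaledQuartic_coe_X_mul (u : K) (β : LaurentSeries K) :
    aeval ((PowerSeries.X : PowerSeries K) * β : LaurentSeries K) (scaledQuartic u) =
      (PowerSeries.X : PowerSeries K) ^ 4 * quartic u β := by
  have hC (c : K) : ((PowerSeries.C c : PowerSeries K) : LaurentSeries K) = algebraMap K _ c :=
    rfl
  simp only [scaledQuartic, quartic, map_add, map_sub, map_mul, map_pow, aeval_X, aeval_C,
    LaurentSeries.coe_algebraMap, hC]
  set t := HahnSeries.ofPowerSeries ℤ K PowerSeries.X
  set a := algebraMap K (LaurentSeries K)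
  linear_combination (t ^ 3 * β * a u ^ 3 + t ^ 3 * β ^ 3 - t ^ 2 * a u * (Tvar K * t + 1)) *
    coe_X_mul_Tvar (K := K)

end LaurentSeries

theorem statement17_general (F : Type*) [Field F] (u : F) (hu : u ^ 3 + u ^ 2 - u + 1 = 0) :
    ∃ α : LaurentSeries F,
      (α ^ 4 - Tvar F * α ^ 3 -
          algebraMap F (LaurentSeries F) (u ^ 3) * Tvar F * α +
          algebraMap F (LaurentSeries F) u * Tvar F ^ 2 -
          algebraMap F (LaurentSeries F) (u ^ 6) = 0) ∧
      α ≠ 0 ∧ α.order = -1 ∧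
      ∀ β : LaurentSeries F,
        (β ^ 4 - Tvar F * β ^ 3 -
          algebraMap F (LaurentSeries F) (u ^ 3) * Tvar F * β +
          algebraMap F (LaurentSeries F) u * Tvar F ^ 2 -
          algebraMap F (LaurentSeries F) (u ^ 6) = 0) → β = α := by
  have hu0 : u ≠ 0 := by
    rintro rfl
    norm_num at hu
  obtain ⟨w, hw, hw_unique⟩ := existsUnique_isRoot_scaledQuartic hu0
  have hw1 : PowerSeries.constantCoeff w ≠ 0 := by
    rw [constantCoeff_eq_one_of_isRoot_scaledQuartic hu0 hw]
    exact one_ne_zero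
  have hw0 := coe_ne_zero_of_constantCoeff_ne_zero (K := F) hw1
  set t : LaurentSeries F := HahnSeries.ofPowerSeries ℤ F PowerSeries.X
  have ht : t * Tvar F = 1 := coe_X_mul_Tvar
  have hroot (β : LaurentSeries F) : quartic u β = 0 ↔ aeval (t * β) (scaledQuartic u) = 0 := by
    rw [aeval_scaledQuartic_coe_X_mul, mul_eq_zero,
      or_iff_right (pow_ne_zero 4 (left_ne_zero_of_mul_eq_one ht))]
  refine ⟨Tvar F * w, ?_, ?_, ?_, fun β hβ => ?_⟩
  · rw [← quartic, hroot, ← mul_assoc, ht, one_mul, aeval_coe_eq_zero_iff]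
    exact hw
  · exact mul_ne_zero (right_ne_zero_of_mul_eq_one ht) hw0
  · rw [Tvar, HahnSeries.order_single_mul_of_isRegular isRegular_one hw0, order_coe_eq_zero hw1,
      add_zero]
  · have hz := (hroot β).mp hβ
    obtain ⟨v, hv⟩ := exists_coe_eq_of_aeval_eq_zero (scaledQuartic_monic u) hz
    rw [← hv, aeval_coe_eq_zero_iff] at hz
    rw [← hw_unique v hz, hv, ← mul_assoc, mul_comm _ t, ht, one_mul]

/-- Corollary C (first part): with `F_27 = F_3(u)`, `u³ + u² - u + 1 = 0`, the equation
`X⁴ - TX³ - u³TX + uT² - u⁶ = 0` has exactly one root `α` in `F(27) = F_27((T⁻¹))`, and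
this root satisfies `|α| = |T|` (i.e. `α ≠ 0` and `ord(α) = -1`). -/
theorem statement17 (F : Type*) [Field F] [Fintype F] (hF : Fintype.card F = 27)
    (u : F) (hu : u ^ 3 + u ^ 2 - u + 1 = 0) :
    ∃ α : LaurentSeries F,
      (α ^ 4 - Tvar F * α ^ 3 -
          algebraMap F (LaurentSeries F) (u ^ 3) * Tvar F * α +
          algebraMap F (LaurentSeries F) u * Tvar F ^ 2 -
          algebraMap F (LaurentSeries F) (u ^ 6) = 0) ∧
      α ≠ 0 ∧ α.order = -1 ∧
      ∀ β : LaurentSeries F,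
        (β ^ 4 - Tvar F * β ^ 3 -
          algebraMap F (LaurentSeries F) (u ^ 3) * Tvar F * β +
          algebraMap F (LaurentSeries F) u * Tvar F ^ 2 -
          algebraMap F (LaurentSeries F) (u ^ 6) = 0) → β = α :=
  statement17_general F u hu
end
end

section
/- Let u ∈ F_27 be a root of the polynomial X³ + X² − X + 1, irreducible over F_3. Then there is a well-defined sequence (γ_n)_{n≥1} in F_27 with γ_1 = u satisfying γ_{3n−1} = γ_n³/(1+γ_n³), γ_{3n} = γ_n³/(1−γ_n⁶), γ_{3n+1} = γ_n³/(1−γ_n³) for all n ≥ 1; more precisely, for every n ≥ 1 one has γ_n ∉ F_3 (equivalently γ_n³ ≠ γ_n, i.e. γ_n has degree 3 over F_3), and in particular γ_n ≠ 0, 1 + γ_n³ ≠ 0, 1 − γ_n³ ≠ 0 and 1 − γ_n⁶ ≠ 0, so all the denominators in the recursion are nonzero and γ_n ∈ F_27* for all n. -/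
/-! In characteristic `3`, `γ ∉ 𝔽₃` means `γ³ ≠ γ`; Frobenius preserves this, and it gives
`γ ≠ 0`, `1 ± γ ≠ 0`. For `w = z / (1 + z)`, `z / (1 - z²)`, `z / (1 - z)` one finds that
`w³ - w` is `-z (1 - z)`, `-z (z⁴ + 1)`, `-z (1 + z)` over the cube of the denominator, so with
`z = γ_n³ ∉ 𝔽₃` also `w ∉ 𝔽₃`, unless `z⁴ = -1`. In `𝔽₂₇` that is impossible: `z⁸ = z²⁶ = 1`
would force `z² = 1`, hence `z³ = z`. Induction from `γ₁ = u`, which is not in `𝔽₃` since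
`X³ + X² - X + 1` has no root there, gives every claim. -/

theorem pow_pow_eq_pow_iff {R : Type*} [CommRing R] [IsReduced R] {p : ℕ} [ExpChar R p] {x : R} :
    (x ^ p) ^ p = x ^ p ↔ x ^ p = x :=
  (frobenius_inj R p).eq_iff

section PowThreeNeSelf

variable {R : Type*} [CommRing R] {x : R}

theorem ne_zero_of_pow_three_ne_self (hx : x ^ 3 ≠ x) : x ≠ 0 := by
  rintro rfl
  simp at hx

theorem one_add_ne_zero_of_pow_three_ne_self (hx : x ^ 3 ≠ x) : 1 + x ≠ 0 :=
  fun h ↦ hx (by linear_combination (x ^ 2 - x) * h)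

theorem one_sub_ne_zero_of_pow_three_ne_self (hx : x ^ 3 ≠ x) : 1 - x ≠ 0 :=
  fun h ↦ hx (by linear_combination -(x ^ 2 + x) * h)

theorem one_sub_sq_ne_zero_of_pow_three_ne_self (hx : x ^ 3 ≠ x) : 1 - x ^ 2 ≠ 0 :=
  fun h ↦ hx (by linear_combination -x * h)

end PowThreeNeSelf

theorem pow_four_add_one_ne_zero {F : Type*} [Field F] {z : F} (hz : z ^ 3 ≠ z)
    (h27 : z ^ 27 = z) : z ^ 4 + 1 ≠ 0 := by
  intro h
  have h26 : z ^ 26 = 1 := by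
    apply mul_right_cancel₀ (ne_zero_of_pow_three_ne_self hz)
    rw [← pow_succ, h27, one_mul]
  have h8 : z ^ 8 = 1 := by linear_combination (z ^ 4 - 1) * h
  have h2 : z ^ 2 = 1 := pow_gcd_eq_one.mpr ⟨h26, h8⟩
  exact hz (by linear_combination z * h2)

section CharThree

variable {F : Type*} [Field F] [CharP F 3] {z : F}

theorem div_one_add_pow_three_sub (hz : 1 + z ≠ 0) :
    (z / (1 + z)) ^ 3 - z / (1 + z) = -(z * (1 - z)) / (1 + z) ^ 3 := by
  field_simp
  linear_combination -z ^ 2 * CharP.ofNat_eq_zero F 3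

theorem div_one_sub_pow_three_sub (hz : 1 - z ≠ 0) :
    (z / (1 - z)) ^ 3 - z / (1 - z) = -(z * (1 + z)) / (1 - z) ^ 3 := by
  field_simp
  linear_combination z ^ 2 * CharP.ofNat_eq_zero F 3

theorem div_one_sub_sq_pow_three_sub (hz : 1 - z ^ 2 ≠ 0) :
    (z / (1 - z ^ 2)) ^ 3 - z / (1 - z ^ 2) = -(z * (z ^ 4 + 1)) / (1 - z ^ 2) ^ 3 := by
  field_simp
  linear_combination z ^ 3 * CharP.ofNat_eq_zero F 3

theorem div_one_add_pow_three_ne_self (hz : z ^ 3 ≠ z) :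
    (z / (1 + z)) ^ 3 ≠ z / (1 + z) := by
  have hd := one_add_ne_zero_of_pow_three_ne_self hz
  rw [Ne, ← sub_eq_zero, div_one_add_pow_three_sub hd]
  exact div_ne_zero (neg_ne_zero.mpr (mul_ne_zero (ne_zero_of_pow_three_ne_self hz)
    (one_sub_ne_zero_of_pow_three_ne_self hz))) (pow_ne_zero 3 hd)

theorem div_one_sub_pow_three_ne_self (hz : z ^ 3 ≠ z) :
    (z / (1 - z)) ^ 3 ≠ z / (1 - z) := by
  have hd := one_sub_ne_zero_of_pow_three_ne_self hz
  rw [Ne, ← sub_eq_zero, div_one_sub_pow_three_sub hd]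
  exact div_ne_zero (neg_ne_zero.mpr (mul_ne_zero (ne_zero_of_pow_three_ne_self hz)
    (one_add_ne_zero_of_pow_three_ne_self hz))) (pow_ne_zero 3 hd)

theorem div_one_sub_sq_pow_three_ne_self (hz : z ^ 3 ≠ z) (h27 : z ^ 27 = z) :
    (z / (1 - z ^ 2)) ^ 3 ≠ z / (1 - z ^ 2) := by
  have hd := one_sub_sq_ne_zero_of_pow_three_ne_self hz
  rw [Ne, ← sub_eq_zero, div_one_sub_sq_pow_three_sub hd]
  exact div_ne_zero (neg_ne_zero.mpr (mul_ne_zero (ne_zero_of_pow_three_ne_self hz)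
    (pow_four_add_one_ne_zero hz h27))) (pow_ne_zero 3 hd)

theorem pow_three_ne_self_of_root {u : F} (hu : u ^ 3 + u ^ 2 - u + 1 = 0) : u ^ 3 ≠ u := by
  intro h
  have hsq : u ^ 2 = -1 := by linear_combination hu - h
  -- `u = u³ = -u`, and `2` is invertible
  have hu0 : u = 0 := by linear_combination h - u * hsq + u * CharP.ofNat_eq_zero F 3
  simp [hu0] at hsq

end CharThree

section Sequence

variable {F : Type*} [Field F]

/-- `γ_m` for `m = 3n - 1, 3n, 3n + 1` comes from `γ_n`, where `n = (m + 1) / 3`; `γ_0` is junk. -/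
def gammaSeq (u : F) : ℕ → F
  | 0 => 0
  | 1 => u
  | m + 2 =>
    let x := gammaSeq u ((m + 3) / 3)
    x ^ 3 / if (m + 2) % 3 = 2 then 1 + x ^ 3 else if (m + 2) % 3 = 0 then 1 - x ^ 6 else 1 - x ^ 3

variable (u : F) {n : ℕ}

theorem gammaSeq_one : gammaSeq u 1 = u := by
  rw [gammaSeq]

theorem gammaSeq_three_mul_sub_one (hn : 1 ≤ n) :
    gammaSeq u (3 * n - 1) = gammaSeq u n ^ 3 / (1 + gammaSeq u n ^ 3) := by
  obtain ⟨m, rfl⟩ : ∃ m, n = m + 1 := ⟨n - 1, by omega⟩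
  rw [show 3 * (m + 1) - 1 = 3 * m + 2 by omega, gammaSeq]
  simp only [show (3 * m + 3) / 3 = m + 1 by omega, show (3 * m + 2) % 3 = 2 by omega, if_true]

theorem gammaSeq_three_mul (hn : 1 ≤ n) :
    gammaSeq u (3 * n) = gammaSeq u n ^ 3 / (1 - gammaSeq u n ^ 6) := by
  obtain ⟨m, rfl⟩ : ∃ m, n = m + 1 := ⟨n - 1, by omega⟩
  rw [show 3 * (m + 1) = (3 * m + 1) + 2 by omega, gammaSeq]
  simp only [show (3 * m + 1 + 3) / 3 = m + 1 by omega, show (3 * m + 1 + 2) % 3 = 0 by omega]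
  simp

theorem gammaSeq_three_mul_add_one (hn : 1 ≤ n) :
    gammaSeq u (3 * n + 1) = gammaSeq u n ^ 3 / (1 - gammaSeq u n ^ 3) := by
  obtain ⟨m, rfl⟩ : ∃ m, n = m + 1 := ⟨n - 1, by omega⟩
  rw [show 3 * (m + 1) + 1 = (3 * m + 2) + 2 by omega, gammaSeq]
  simp only [show (3 * m + 2 + 3) / 3 = m + 1 by omega, show (3 * m + 2 + 2) % 3 = 1 by omega]
  simp

theorem gammaSeq_pow_three_ne_self [CharP F 3] (h27 : ∀ x : F, x ^ 27 = x)
    (hu : u ^ 3 ≠ u) (hn : 1 ≤ n) : gammaSeq u n ^ 3 ≠ gammaSeq u n := by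
  induction n using Nat.strong_induction_on with
  | _ n ih =>
    obtain rfl | hn2 := hn.eq_or_lt
    · rwa [gammaSeq_one]
    obtain ⟨k, hk, hkn, rfl | rfl | rfl⟩ :
        ∃ k, 1 ≤ k ∧ k < n ∧ (n = 3 * k - 1 ∨ n = 3 * k ∨ n = 3 * k + 1) :=
      ⟨(n + 1) / 3, by omega, by omega, by omega⟩
    all_goals
      have hz := pow_pow_eq_pow_iff.not.mpr (ih k hkn hk)
    · rw [gammaSeq_three_mul_sub_one u hk]
      exact div_one_add_pow_three_ne_self hz
    · rw [gammaSeq_three_mul u hk, show gammaSeq u k ^ 6 = (gammaSeq u k ^ 3) ^ 2 by ring]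
      exact div_one_sub_sq_pow_three_ne_self hz (h27 _)
    · rw [gammaSeq_three_mul_add_one u hk]
      exact div_one_sub_pow_three_ne_self hz

end Sequence

/-- Corollary C (the sequence `(γ_n)`): with `F_27 = F_3(u)`, `u³ + u² - u + 1 = 0`,
there is a well-defined sequence `(γ_n)_{n≥1}` in `F_27` with `γ₁ = u` and
`γ_{3n-1} = γ_n³/(1+γ_n³)`, `γ_{3n} = γ_n³/(1-γ_n⁶)`, `γ_{3n+1} = γ_n³/(1-γ_n³)`;
moreover every `γ_n` has degree `3` over `F_3` (equivalently `γ_n³ ≠ γ_n`), so in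
particular all the denominators are nonzero and `γ_n ∈ F_27*`. -/
theorem statement18 (F : Type*) [Field F] [Fintype F] (hF : Fintype.card F = 27)
    (u : F) (hu : u ^ 3 + u ^ 2 - u + 1 = 0) :
    ∃ γ : ℕ → F, γ 1 = u ∧
      (∀ n, 1 ≤ n →
        γ (3 * n - 1) = γ n ^ 3 / (1 + γ n ^ 3) ∧
        γ (3 * n) = γ n ^ 3 / (1 - γ n ^ 6) ∧
        γ (3 * n + 1) = γ n ^ 3 / (1 - γ n ^ 3)) ∧
      (∀ n, 1 ≤ n → γ n ^ 3 ≠ γ n) ∧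
      (∀ n, 1 ≤ n →
        γ n ≠ 0 ∧ 1 + γ n ^ 3 ≠ 0 ∧ 1 - γ n ^ 3 ≠ 0 ∧ 1 - γ n ^ 6 ≠ 0) := by
  have : CharP F 3 := charP_of_card_eq_prime_pow (f := 3) hF
  have h27 (x : F) : x ^ 27 = x := hF ▸ FiniteField.pow_card x
  have hγ (n : ℕ) (hn : 1 ≤ n) := gammaSeq_pow_three_ne_self u h27 (pow_three_ne_self_of_root hu) hn
  refine ⟨gammaSeq u, gammaSeq_one u, fun n hn ↦ ⟨gammaSeq_three_mul_sub_one u hn,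
    gammaSeq_three_mul u hn, gammaSeq_three_mul_add_one u hn⟩, hγ, fun n hn ↦ ?_⟩
  have hz := pow_pow_eq_pow_iff.not.mpr (hγ n hn)
  refine ⟨ne_zero_of_pow_three_ne_self (hγ n hn), one_add_ne_zero_of_pow_three_ne_self hz,
    one_sub_ne_zero_of_pow_three_ne_self hz, ?_⟩
  rw [show gammaSeq u n ^ 6 = (gammaSeq u n ^ 3) ^ 2 by ring]
  exact one_sub_sq_ne_zero_of_pow_three_ne_self hz
end
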